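/- Let x, y, z be real numbers with 0 < y ≤ z < x, x + y < 2, and y + z < 2. Then arccos((x + y)/2) − arccos((y + z)/2) + (x − y)/√(4 − (x + y)²) + (y − z)/√(4 − (y + z)²) > 0. -/

import Mathlib

/-!
Put `a = (x + y)/2` and `b = (y + z)/2`, so that `y ≤ b < a < 1`. Since
`(s - 2y)/√(4 - s²) = (s/2 - y)/√(1 - (s/2)²)`, the expression is `g a - g b` for
`g t = arccos t + (t - y)/√(1 - t²)`, and `g' t = t (t - y)/(1 - t²)^{3/2}` is positive
for `0 ≤ y < t < 1`.
-/

open Real Set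

noncomputable def deformationProfile (y t : ℝ) : ℝ :=
  arccos t + (t - y) / √(1 - t ^ 2)

lemma div_sqrt_four_sub_sq (s u : ℝ) :
    (s - 2 * u) / √(4 - s ^ 2) = (s / 2 - u) / √(1 - (s / 2) ^ 2) := by
  have hsqrt : √(4 - s ^ 2) = 2 * √(1 - (s / 2) ^ 2) := by
    rw [show 4 - s ^ 2 = 2 ^ 2 * (1 - (s / 2) ^ 2) by ring, sqrt_mul (by norm_num),
      sqrt_sq (by norm_num)]
  rw [hsqrt, mul_comm, ← div_div]
  congr 1
  ring

lemma hasDerivAt_deformationProfile (y : ℝ) {t : ℝ} (ht₀ : -1 < t) (ht₁ : t < 1) :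
    HasDerivAt (deformationProfile y) (t * (t - y) / ((1 - t ^ 2) * √(1 - t ^ 2))) t := by
  have hpos : 0 < 1 - t ^ 2 := by nlinarith
  have hsqrt : 0 < √(1 - t ^ 2) := sqrt_pos.mpr hpos
  have hsq : √(1 - t ^ 2) ^ 2 = 1 - t ^ 2 := sq_sqrt hpos.le
  have hquot := ((hasDerivAt_id' t).sub_const y).div
    (((hasDerivAt_pow 2 t).const_sub 1).sqrt hpos.ne') hsqrt.ne'
  refine ((hasDerivAt_arccos ht₀.ne' ht₁.ne).add hquot).congr_deriv ?_
  rw [hsq]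
  field_simp
  linear_combination 2 * hsq

lemma strictMonoOn_deformationProfile {y : ℝ} (hy : 0 ≤ y) :
    StrictMonoOn (deformationProfile y) (Ico y 1) := by
  apply strictMonoOn_of_deriv_pos (convex_Ico y 1)
  · rintro t ⟨hyt, ht₁⟩
    exact (hasDerivAt_deformationProfile y (by linarith) ht₁).continuousAt.continuousWithinAt
  · rw [interior_Ico]
    rintro t ⟨hyt, ht₁⟩
    rw [(hasDerivAt_deformationProfile y (by linarith) ht₁).deriv]
    have hpos : 0 < 1 - t ^ 2 := by nlinarith
    have hnum : 0 < t * (t - y) := mul_pos (by linarith) (by linarith)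
    positivity

theorem deformation_derivative_pos (x y z : ℝ) (hy : 0 < y) (hyz : y ≤ z)
    (hzx : z < x) (hsum₁ : x + y < 2) :
    Real.arccos ((x + y) / 2) - Real.arccos ((y + z) / 2)
      + (x - y) / Real.sqrt (4 - (x + y) ^ 2)
      + (y - z) / Real.sqrt (4 - (y + z) ^ 2) > 0 := by
  have hx : (x - y) / √(4 - (x + y) ^ 2) = ((x + y) / 2 - y) / √(1 - ((x + y) / 2) ^ 2) := by
    rw [← div_sqrt_four_sub_sq]; ring_nf
  have hz : (y - z) / √(4 - (y + z) ^ 2) = -(((y + z) / 2 - y) / √(1 - ((y + z) / 2) ^ 2)) := by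
    rw [← div_sqrt_four_sub_sq, ← neg_div]; ring_nf
  have hb : (y + z) / 2 ∈ Ico y 1 := ⟨by linarith, by linarith⟩
  have ha : (x + y) / 2 ∈ Ico y 1 := ⟨by linarith, by linarith⟩
  have hlt := strictMonoOn_deformationProfile hy.le hb ha (by linarith)
  unfold deformationProfile at hlt
  rw [hx, hz]
  linarith
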